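/- Let X₁, X₂, X₃ be an ℝ-basis of su(2) and λ₁, λ₂ real numbers such that [X₂, X₃] = λ₁ X₁, [X₃, X₁] = λ₂ X₂, and [X₁, X₂] = λ₂ X₃. Then λ₁λ₂ > 0, and the rescaled triple Y₁ := −(2/λ₂) X₁, Y₂ := (2/√(λ₁λ₂)) X₂, Y₃ := (2/√(λ₁λ₂)) X₃ satisfies the standard relations [Y₂,Y₃] = −2Y₁, [Y₃,Y₁] = −2Y₂, [Y₁,Y₂] = −2Y₃. (This is the Lie-algebraic form of the criterion that the left-invariant metric making X₁, X₂, X₃ orthonormal is a Berger metric, with parameters c = λ₁λ₂/4 and b = √(λ₁/λ₂).) -/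
import Mathlib

open Matrix BigOperators

lemma trace_sq_neg {A : Matrix (Fin 2) (Fin 2) ℂ} (h : Aᴴ = -A) (hA : A ≠ 0) :
    ((A * A).trace).re < 0 ∧ ((A * A).trace).im = 0 := by
  have h00 := congrFun (congrFun h 0) 0
  have h01 := congrFun (congrFun h 0) 1
  have h11 := congrFun (congrFun h 1) 1
  simp only [Matrix.conjTranspose_apply, Matrix.neg_apply] at h00 h01 h11
  -- h01 : star (A 1 0) = -A 0 1
  have hre00 : (A 0 0).re = 0 := by
    have := congrArg Complex.re h00; simp at this; linarith
  have hre11 : (A 1 1).re = 0 := by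
    have := congrArg Complex.re h11; simp at this; linarith
  have hv : A 1 0 = -(starRingEnd ℂ) (A 0 1) := by
    have := congrArg star h01
    simpa [star_eq_iff_star_eq] using this
  have hvre : (A 1 0).re = -(A 0 1).re := by rw [hv]; simp
  have hvim : (A 1 0).im = (A 0 1).im := by rw [hv]; simp
  have htr : (A * A).trace = A 0 0 * A 0 0 + A 0 1 * A 1 0 + (A 1 0 * A 0 1 + A 1 1 * A 1 1) := by
    simp [Matrix.trace, Matrix.mul_apply, Fin.sum_univ_two, Matrix.diag]
  have him : ((A * A).trace).im = 0 := by
    rw [htr]; simp [Complex.add_im, Complex.mul_im, hre00, hre11, hvre, hvim]; ring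
  have hS : ((A * A).trace).re =
      -((A 0 0).im ^ 2) - (A 1 1).im ^ 2 - 2 * ((A 0 1).re ^ 2 + (A 0 1).im ^ 2) := by
    rw [htr]; simp [Complex.add_re, Complex.mul_re, hre00, hre11, hvre, hvim]; ring
  refine ⟨?_, him⟩
  have hne : ¬((A 0 0).im = 0 ∧ (A 1 1).im = 0 ∧ (A 0 1).re = 0 ∧ (A 0 1).im = 0) := by
    rintro ⟨e1, e2, e3, e4⟩
    apply hA
    ext i j
    fin_cases i <;> fin_cases j <;>
      simp_all [Complex.ext_iff]
  rw [hS]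
  rcases not_and_or.mp hne with h' | h'
  · nlinarith [sq_nonneg (A 0 0).im, sq_nonneg (A 1 1).im, sq_nonneg (A 0 1).re,
      sq_nonneg (A 0 1).im, sq_pos_of_ne_zero h']
  rcases not_and_or.mp h' with h' | h'
  · nlinarith [sq_nonneg (A 0 0).im, sq_nonneg (A 1 1).im, sq_nonneg (A 0 1).re,
      sq_nonneg (A 0 1).im, sq_pos_of_ne_zero h']
  rcases not_and_or.mp h' with h' | h'
  · nlinarith [sq_nonneg (A 0 0).im, sq_nonneg (A 1 1).im, sq_nonneg (A 0 1).re,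
      sq_nonneg (A 0 1).im, sq_pos_of_ne_zero h']
  · nlinarith [sq_nonneg (A 0 0).im, sq_nonneg (A 1 1).im, sq_nonneg (A 0 1).re,
      sq_nonneg (A 0 1).im, sq_pos_of_ne_zero h']

theorem berger_frame_rescaling
    (X : Fin 3 → Matrix (Fin 2) (Fin 2) ℂ)
    (hmem : ∀ i, (X i)ᴴ = -X i ∧ (X i).trace = 0)
    (hind : LinearIndependent ℝ X)
    (hspan : ∀ A : Matrix (Fin 2) (Fin 2) ℂ, Aᴴ = -A → A.trace = 0 →
      A ∈ Submodule.span ℝ (Set.range X))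
    (l₁ l₂ : ℝ)
    (h₁ : X 1 * X 2 - X 2 * X 1 = l₁ • X 0)
    (h₂ : X 2 * X 0 - X 0 * X 2 = l₂ • X 1)
    (h₃ : X 0 * X 1 - X 1 * X 0 = l₂ • X 2) :
    0 < l₁ * l₂ ∧
    ∀ Y₁ Y₂ Y₃ : Matrix (Fin 2) (Fin 2) ℂ,
      Y₁ = (-(2 / l₂)) • X 0 →
      Y₂ = (2 / Real.sqrt (l₁ * l₂)) • X 1 →
      Y₃ = (2 / Real.sqrt (l₁ * l₂)) • X 2 →
      Y₂ * Y₃ - Y₃ * Y₂ = (-2 : ℝ) • Y₁ ∧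
      Y₃ * Y₁ - Y₁ * Y₃ = (-2 : ℝ) • Y₂ ∧
      Y₁ * Y₂ - Y₂ * Y₁ = (-2 : ℝ) • Y₃ := by
  -- l₂ ≠ 0
  have hX0 : X 0 ≠ 0 := hind.ne_zero 0
  have hX1 : X 1 ≠ 0 := hind.ne_zero 1
  have hl₂ : l₂ ≠ 0 := by
    intro hzero
    subst hzero
    simp only [zero_smul, sub_eq_zero] at h₂ h₃
    have key : ∀ A ∈ Submodule.span ℝ (Set.range X), X 0 * A = A * X 0 := by
      intro A hA
      induction hA using Submodule.span_induction with
      | mem x hx =>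
        obtain ⟨i, rfl⟩ := hx
        fin_cases i
        · rfl
        · simpa using h₃
        · simpa using h₂.symm
      | zero => simp
      | add x y _ _ hx hy => rw [Matrix.mul_add, Matrix.add_mul, hx, hy]
      | smul c x _ hx => rw [Matrix.mul_smul, Matrix.smul_mul, hx]
    have hP : X 0 * !![Complex.I, 0; 0, -Complex.I] = !![Complex.I, 0; 0, -Complex.I] * X 0 := by
      apply key
      apply hspan
      · ext i j
        fin_cases i <;> fin_cases j <;> simp [Matrix.conjTranspose_apply]
      · simp [Matrix.trace_fin_two_of]
    have hQ : X 0 * !![0, 1; -1, 0] = !![0, 1; -1, 0] * X 0 := by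
      apply key
      apply hspan
      · ext i j
        fin_cases i <;> fin_cases j <;> simp [Matrix.conjTranspose_apply]
      · simp [Matrix.trace_fin_two_of]
    have e01 := congrFun (congrFun hP 0) 1
    have e10 := congrFun (congrFun hP 1) 0
    have f00 := congrFun (congrFun hQ 0) 1
    simp only [Matrix.mul_apply, Fin.sum_univ_two, Matrix.cons_val', Matrix.cons_val_zero,
      Matrix.cons_val_one, Matrix.head_cons, Matrix.empty_val', Matrix.cons_val_fin_one,
      Matrix.head_fin_const, Matrix.of_apply] at e01 e10 f00
    have hA01 : X 0 0 1 = 0 := by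
      have h2 : (2 * Complex.I) * X 0 0 1 = 0 := by linear_combination -e01
      simpa [Complex.I_ne_zero] using h2
    have hA10 : X 0 1 0 = 0 := by
      have h2 : (2 * Complex.I) * X 0 1 0 = 0 := by linear_combination e10
      simpa [Complex.I_ne_zero] using h2
    have htr0 : X 0 0 0 + X 0 1 1 = 0 := by
      have := (hmem 0).2
      rwa [Matrix.trace_fin_two] at this
    have hdiag : X 0 0 0 = X 0 1 1 := by linear_combination f00
    have hA00 : X 0 0 0 = 0 := by linear_combination (htr0 + hdiag)/2
    have hA11 : X 0 1 1 = 0 := by linear_combination (htr0 - hdiag)/2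
    apply hX0
    ext i j
    fin_cases i <;> fin_cases j <;> simp_all
  -- trace identity
  have ta := trace_sq_neg (hmem 0).1 hX0
  have tb := trace_sq_neg (hmem 1).1 hX1
  have e1 := congrArg (fun M => (M * X 0).trace) h₁
  have e2 := congrArg (fun M => (M * X 1).trace) h₂
  simp only [Matrix.sub_mul, Matrix.trace_sub, Matrix.smul_mul, Matrix.trace_smul, Complex.real_smul] at e1 e2
  rw [Matrix.trace_mul_cycle (X 1) (X 2) (X 0), Matrix.trace_mul_cycle (X 2) (X 1) (X 0)] at e1
  rw [Matrix.trace_mul_cycle (X 2) (X 0) (X 1), Matrix.trace_mul_cycle (X 1) (X 2) (X 0)] at e2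
  have keyC : (l₁ : ℂ) * (X 0 * X 0).trace = (l₂ : ℂ) * (X 1 * X 1).trace := by
    linear_combination e2 - e1
  have keyR : l₁ * (X 0 * X 0).trace.re = l₂ * (X 1 * X 1).trace.re := by
    have := congrArg Complex.re keyC
    simpa [Complex.mul_re, Complex.ofReal_re, Complex.ofReal_im, ta.2, tb.2] using this
  have hpos : 0 < l₁ * l₂ := by
    have h2 : 0 < l₂ ^ 2 := by positivity
    have keyR2 : l₁ * l₂ * (X 0 * X 0).trace.re = l₂ ^ 2 * (X 1 * X 1).trace.re := by
      linear_combination l₂ * keyR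
    nlinarith [ta.1, tb.1, keyR2, h2]
  refine ⟨hpos, ?_⟩
  intro Y₁ Y₂ Y₃ hY₁ hY₂ hY₃
  subst hY₁ hY₂ hY₃
  set s : ℝ := Real.sqrt (l₁ * l₂) with hs
  have hs2 : s ^ 2 = l₁ * l₂ := Real.sq_sqrt hpos.le
  have hs0 : 0 < s := Real.sqrt_pos.mpr hpos
  have hl₁ : l₁ ≠ 0 := by rintro rfl; simp at hpos
  have hcomm : ∀ (r t : ℝ) (A B : Matrix (Fin 2) (Fin 2) ℂ),
      (r • A) * (t • B) - (t • B) * (r • A) = (r * t) • (A * B - B * A) := by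
    intro r t A B
    rw [Matrix.smul_mul, Matrix.smul_mul, Matrix.mul_smul, Matrix.mul_smul,
      smul_smul, smul_smul, smul_sub, mul_comm t r]
  refine ⟨?_, ?_, ?_⟩
  · rw [hcomm (2/s) (2/s) (X 1) (X 2), h₁, smul_smul, smul_smul]
    congr 1
    field_simp
    nlinarith [hs2]
  · rw [hcomm (2/s) (-(2/l₂)) (X 2) (X 0), h₂, smul_smul, smul_smul]
    congr 1
    field_simp
  · rw [hcomm (-(2/l₂)) (2/s) (X 0) (X 1), h₃, smul_smul, smul_smul]
    congr 1
    field_simp
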